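/- Define F*_k(q) as the minimum n such that Paul has a winning strategy in the q-round pathological liar game with k lies and initial state (n, 0, ..., 0). Then F*_k(q) ≥ 2^q / C(q, ≤ k), i.e., F*_k(q) · C(q, ≤ k) ≥ 2^q. -/
import Mathlib


open Finset

/-- `C(q, ≤ m) = ∑_{j=0}^m C(q,j)`. -/
def csum (q m : ℕ) : ℕ := ∑ j ∈ Finset.range (m + 1), Nat.choose q j

/-- The index `i - 1` (with `0 - 1 = 0`). -/
def prev {k : ℕ} (i : Fin (k + 1)) : Fin (k + 1) :=
  ⟨i.val - 1, Nat.lt_of_le_of_lt (Nat.sub_le _ _) i.isLt⟩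

/-- The "Yes" successor state. -/
def Ynext {k : ℕ} (x a : Fin (k + 1) → ℕ) (i : Fin (k + 1)) : ℕ :=
  if i.val = 0 then a i else a i + (x (prev i) - a (prev i))

/-- The "No" successor state. -/
def Nnext {k : ℕ} (x a : Fin (k + 1) → ℕ) (i : Fin (k + 1)) : ℕ :=
  if i.val = 0 then x i - a i else (x i - a i) + a (prev i)

/-- Paul has a winning strategy in the `q`-round pathological liar game with `k` lies from
state `x`: he can guarantee that at least one element survives after `q` rounds. -/
def PaulWins (k : ℕ) : ℕ → (Fin (k + 1) → ℕ) → Prop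
  | 0, x => ∃ i, 1 ≤ x i
  | q + 1, x => ∃ a : Fin (k + 1) → ℕ, (∀ i, a i ≤ x i) ∧
      PaulWins k q (Ynext x a) ∧ PaulWins k q (Nnext x a)

/-- The initial state `(n, 0, …, 0)`. -/
def initState (k n : ℕ) : Fin (k + 1) → ℕ := fun i => if i.val = 0 then n else 0

/-- `F*_k(q)`, the minimum `n` such that Paul wins the `q`-round pathological liar game
with `k` lies and initial state `(n, 0, …, 0)`. -/
noncomputable def Fstar (k q : ℕ) : ℕ := sInf {n : ℕ | PaulWins k q (initState k n)}

-- auxiliary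
def wt (k q : ℕ) (x : Fin (k + 1) → ℕ) : ℕ := ∑ i, x i * csum q (k - i.val)

lemma csum_zero_right (q : ℕ) : csum q 0 = 1 := by simp [csum]

lemma csum_zero_left (m : ℕ) : csum 0 m = 1 := by
  induction m with
  | zero => simp [csum]
  | succ m ih =>
    have : csum 0 (m+1) = csum 0 m + Nat.choose 0 (m+1) := by
      simp [csum, Finset.sum_range_succ]
    simp [this, ih]

lemma csum_pascal (q m : ℕ) : csum (q+1) (m+1) = csum q (m+1) + csum q m := by
  induction m with
  | zero => simp [csum, Finset.sum_range_succ]; omega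
  | succ m ih =>
    show csum (q+1) (m+2) = csum q (m+2) + csum q (m+1)
    have h1 : csum (q+1) (m+2) = csum (q+1) (m+1) + Nat.choose (q+1) (m+2) := by
      simp [csum, Finset.sum_range_succ]
    have h2 : csum q (m+2) = csum q (m+1) + Nat.choose q (m+2) := by
      simp [csum, Finset.sum_range_succ]
    have h3 : csum q (m+1) = csum q m + Nat.choose q (m+1) := by
      simp [csum, Finset.sum_range_succ]
    have h4 : Nat.choose (q+1) (m+2) = Nat.choose q (m+1) + Nat.choose q (m+2) :=
      Nat.choose_succ_succ q (m+1)
    omega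

lemma prev_succ {k : ℕ} (j : Fin k) : prev (j.succ : Fin (k+1)) = j.castSucc := by
  apply Fin.ext; simp [prev]

lemma wt_split (k q : ℕ) (x a : Fin (k + 1) → ℕ) (h : ∀ i, a i ≤ x i) :
    wt k (q+1) x = wt k q (Ynext x a) + wt k q (Nnext x a) := by
  have key : ∀ i : Fin (k+1),
      Ynext x a i * csum q (k - i.val) + Nnext x a i * csum q (k - i.val)
      = x i * csum q (k - i.val)
        + (if i.val = 0 then 0 else x (prev i) * csum q (k - i.val)) := by
    intro i
    rw [← add_mul]
    by_cases h0 : i.val = 0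
    · have h1 := h i
      simp only [Ynext, Nnext, h0, if_pos, if_true]
      have e : a i + (x i - a i) = x i := by omega
      rw [e]
      simp
    · have h1 := h i
      have h2 := h (prev i)
      simp only [Ynext, Nnext, if_neg h0]
      rw [← add_mul]
      congr 1
      omega
  have hsum : wt k q (Ynext x a) + wt k q (Nnext x a)
      = wt k q x + ∑ j : Fin k, x j.castSucc * csum q (k - (j.val + 1)) := by
    rw [wt, wt, ← Finset.sum_add_distrib]
    rw [Finset.sum_congr rfl (fun i _ => key i), Finset.sum_add_distrib]
    congr 1
    rw [Fin.sum_univ_succ]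
    simp [prev_succ]
  rw [hsum]
  rw [wt, wt, Fin.sum_univ_castSucc, Fin.sum_univ_castSucc]
  simp only [Fin.coe_castSucc, Fin.val_last, Nat.sub_self, csum_zero_right, mul_one]
  have hterm : ∀ j : Fin k, x j.castSucc * csum (q+1) (k - j.val)
      = x j.castSucc * csum q (k - j.val) + x j.castSucc * csum q (k - (j.val + 1)) := by
    intro j
    have hj : j.val < k := j.isLt
    have hm : k - j.val = (k - (j.val + 1)) + 1 := by omega
    rw [hm, csum_pascal, Nat.mul_add]
  rw [Finset.sum_congr rfl (fun j _ => hterm j), Finset.sum_add_distrib]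
  omega

lemma wt_ge (k : ℕ) : ∀ q (x : Fin (k + 1) → ℕ), PaulWins k q x → 2 ^ q ≤ wt k q x := by
  intro q
  induction q with
  | zero =>
    intro x hx
    obtain ⟨i, hi⟩ := hx
    have : x i * csum 0 (k - i.val) ≤ wt k 0 x :=
      Finset.single_le_sum (f := fun i => x i * csum 0 (k - i.val)) (fun _ _ => Nat.zero_le _)
        (Finset.mem_univ i)
    rw [csum_zero_left, mul_one] at this
    simpa using le_trans hi this
  | succ q ih =>
    intro x hx
    obtain ⟨a, ha, hY, hN⟩ := hx
    rw [wt_split k q x a ha, pow_succ]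
    have := ih _ hY
    have := ih _ hN
    omega

lemma paulWins_of (k : ℕ) : ∀ q (x : Fin (k + 1) → ℕ), 2 ^ q ≤ x 0 → PaulWins k q x := by
  intro q
  induction q with
  | zero => intro x hx; exact ⟨0, hx⟩
  | succ q ih =>
    intro x hx
    refine ⟨fun i => if i.val = 0 then 2 ^ q else 0, ?_, ?_, ?_⟩
    · intro i
      by_cases h0 : i.val = 0
      · have : i = 0 := Fin.ext h0
        subst this
        simp only [if_pos h0]
        calc 2 ^ q ≤ 2 ^ (q+1) := Nat.pow_le_pow_right (by norm_num) (by omega)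
          _ ≤ x 0 := hx
      · simp [h0]
    · apply ih
      simp [Ynext]
    · apply ih
      have : Nnext x (fun i => if i.val = 0 then 2 ^ q else 0) 0 = x 0 - 2 ^ q := by
        simp [Nnext]
      rw [this]
      have : 2 ^ (q+1) = 2 ^ q + 2 ^ q := by ring
      omega

lemma wt_initState (k q n : ℕ) : wt k q (initState k n) = n * csum q k := by
  rw [wt, Fin.sum_univ_succ]
  simp [initState]

/-- Sphere bound for `F*_k(q)`:  `F*_k(q) · C(q, ≤ k) ≥ 2^q`. -/
theorem Fstar_sphere_bound (k q : ℕ) : 2 ^ q ≤ Fstar k q * csum q k := by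
  have hne : PaulWins k q (initState k (2 ^ q)) := by
    apply paulWins_of
    simp [initState]
  have hmem : Fstar k q ∈ {n : ℕ | PaulWins k q (initState k n)} :=
    Nat.sInf_mem ⟨2 ^ q, hne⟩
  have := wt_ge k q _ hmem
  rwa [wt_initState] at this
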